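/- For any ε > 0, any point x* ∈ ℝ^d, and any δ > 0, there exists a function f2: ℝ^d → ℝ expressible as a composition of affine maps and ReLU (x ↦ max(x, 0)) such that f2(x) = 0 whenever x lies outside the open hypercube H of side length δ centered at x*, and 0 < f2(x) < ε/4 for all x in the interior of H. -/
import Mathlib

/-- A function expressible as a composition of affine maps and the
coordinatewise ReLU nonlinearity, i.e. a feedforward ReLU neural network. -/
inductive IsReLUNet : ∀ {n m : ℕ}, ((Fin n → ℝ) → (Fin m → ℝ)) → Prop
  | affine {n m : ℕ} (W : Matrix (Fin m) (Fin n) ℝ) (b : Fin m → ℝ) :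
      IsReLUNet (fun x => W.mulVec x + b)
  | relu {n : ℕ} : IsReLUNet (fun x : Fin n → ℝ => fun i => max (x i) 0)
  | comp {n m k : ℕ} {f : (Fin n → ℝ) → (Fin m → ℝ)} {g : (Fin m → ℝ) → (Fin k → ℝ)} :
      IsReLUNet f → IsReLUNet g → IsReLUNet (g ∘ f)

lemma sum_if_mul {n : ℕ} (j : Fin n) (c : ℝ) (x : Fin n → ℝ) :
    (∑ i, (if i = j then c else 0) * x i) = c * x j := by
  simp [ite_mul]

lemma relu_sub (a : ℝ) : max a 0 - max (-a) 0 = a := by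
  rcases le_total 0 a with h | h
  · rw [max_eq_left h, max_eq_right (neg_nonpos.2 h), sub_zero]
  · rw [max_eq_right h, max_eq_left (neg_nonneg.2 h), zero_sub, neg_neg]

lemma relu_add_abs (a : ℝ) : max a 0 + max (-a) 0 = |a| := by
  rcases le_total 0 a with h | h
  · rw [max_eq_left h, max_eq_right (neg_nonpos.2 h), add_zero, abs_of_nonneg h]
  · rw [max_eq_right h, max_eq_left (neg_nonneg.2 h), zero_add, abs_of_nonpos h]

/-- Duplication net: x ↦ (relu x, relu (-x)). -/
lemma dup_net (n : ℕ) : ∃ D : (Fin n → ℝ) → (Fin (n + n) → ℝ), IsReLUNet D ∧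
    ∀ x, (∀ j, D x (Fin.castAdd n j) = max (x j) 0) ∧
         (∀ j, D x (Fin.natAdd n j) = max (-x j) 0) := by
  classical
  set M : Matrix (Fin (n + n)) (Fin n) ℝ :=
    (fun r => Fin.addCases (motive := fun _ => Fin n → ℝ)
      (fun j i => if i = j then 1 else 0)
      (fun j i => if i = j then -1 else 0) r) with hM
  have hrowL : ∀ j : Fin n, M (Fin.castAdd n j) = fun i => if i = j then (1:ℝ) else 0 := by
    intro j; rw [hM]
    exact @Fin.addCases_left n n (fun _ => Fin n → ℝ)
      (fun j i => if i = j then (1:ℝ) else 0) (fun j i => if i = j then (-1:ℝ) else 0) j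
  have hrowR : ∀ j : Fin n, M (Fin.natAdd n j) = fun i => if i = j then (-1:ℝ) else 0 := by
    intro j; rw [hM]
    exact @Fin.addCases_right n n (fun _ => Fin n → ℝ)
      (fun j i => if i = j then (1:ℝ) else 0) (fun j i => if i = j then (-1:ℝ) else 0) j
  refine ⟨(fun y => fun i => max (y i) 0) ∘ (fun x => M.mulVec x + 0),
    IsReLUNet.comp (.affine M 0) .relu, fun x => ⟨fun j => ?_, fun j => ?_⟩⟩
  · show max (M.mulVec x (Fin.castAdd n j) + 0) 0 = _
    rw [add_zero, show M.mulVec x (Fin.castAdd n j)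
        = ∑ i, M (Fin.castAdd n j) i * x i from rfl, hrowL j]
    simp only [sum_if_mul, one_mul]
  · show max (M.mulVec x (Fin.natAdd n j) + 0) 0 = _
    rw [add_zero, show M.mulVec x (Fin.natAdd n j)
        = ∑ i, M (Fin.natAdd n j) i * x i from rfl, hrowR j]
    simp only [sum_if_mul, neg_one_mul]

/-- ReLU applied only to the last coordinate. -/
lemma reluLast_net (n : ℕ) : ∃ R : (Fin (n+1) → ℝ) → (Fin (n+1) → ℝ), IsReLUNet R ∧
    ∀ x, R x = Fin.snoc (Fin.init x) (max (x (Fin.last n)) 0) := by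
  classical
  obtain ⟨D, hD, hDval⟩ := dup_net (n+1)
  set M2 : Matrix (Fin (n+1)) (Fin ((n+1) + (n+1))) ℝ :=
    fun j => if j = Fin.last n then (fun c => if c = Fin.castAdd (n+1) j then 1 else 0)
      else fun c => (if c = Fin.castAdd (n+1) j then 1 else 0)
             + (if c = Fin.natAdd (n+1) j then -1 else 0) with hM2
  refine ⟨(fun y => M2.mulVec y + 0) ∘ D, IsReLUNet.comp hD (.affine M2 0), fun x => ?_⟩
  funext j
  show M2.mulVec (D x) j + 0 = _
  rw [add_zero, show M2.mulVec (D x) j = ∑ c, M2 j c * D x c from rfl]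
  by_cases hj : j = Fin.last n
  · subst hj
    have : M2 (Fin.last n) = fun c => if c = Fin.castAdd (n+1) (Fin.last n) then (1:ℝ) else 0 := by
      rw [hM2]; simp
    rw [this]
    simp only [sum_if_mul, one_mul, (hDval x).1, Fin.snoc_last]
  · obtain ⟨j₀, rfl⟩ := Fin.exists_castSucc_eq.2 hj
    have : M2 j₀.castSucc = fun c => (if c = Fin.castAdd (n+1) j₀.castSucc then (1:ℝ) else 0)
             + (if c = Fin.natAdd (n+1) j₀.castSucc then -1 else 0) := by
      rw [hM2]; simp [hj]
    rw [this]
    have hsplit : (∑ c, ((if c = Fin.castAdd (n+1) j₀.castSucc then (1:ℝ) else 0)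
             + (if c = Fin.natAdd (n+1) j₀.castSucc then -1 else 0)) * D x c)
        = (∑ c, (if c = Fin.castAdd (n+1) j₀.castSucc then (1:ℝ) else 0) * D x c)
          + (∑ c, (if c = Fin.natAdd (n+1) j₀.castSucc then (-1:ℝ) else 0) * D x c) := by
      rw [← Finset.sum_add_distrib]
      exact Finset.sum_congr rfl fun c _ => by ring
    rw [hsplit, sum_if_mul, sum_if_mul, (hDval x).1, (hDval x).2, Fin.snoc_castSucc]
    have := relu_sub (x j₀.castSucc)
    simp only [one_mul, neg_one_mul, Fin.init]
    linarith

/-- Padding: extend a net by one passthrough-with-relu coordinate. -/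
lemma pad_net : ∀ {n m : ℕ} {f : (Fin n → ℝ) → (Fin m → ℝ)}, IsReLUNet f →
    IsReLUNet (fun x : Fin (n+1) → ℝ =>
      (Fin.snoc (f (Fin.init x)) (max (x (Fin.last n)) 0) : Fin (m+1) → ℝ)) := by
  intro n m f hf
  induction hf with
  | affine W b =>
    rename_i n m
    obtain ⟨R, hR, hRval⟩ := reluLast_net n
    set W' : Matrix (Fin (m+1)) (Fin (n+1)) ℝ :=
      Fin.snoc (fun j => Fin.snoc (W j) 0) (Fin.snoc 0 1) with hW'
    set b' : Fin (m+1) → ℝ := Fin.snoc b 0 with hb'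
    have key : (fun x : Fin (n+1) → ℝ =>
        (Fin.snoc (W.mulVec (Fin.init x) + b) (max (x (Fin.last n)) 0) : Fin (m+1) → ℝ))
        = (fun y => W'.mulVec y + b') ∘ R := by
      funext x
      rw [Function.comp_apply, hRval]
      set z : Fin (n+1) → ℝ := Fin.snoc (Fin.init x) (max (x (Fin.last n)) 0) with hz
      funext j
      show _ = W'.mulVec z j + b' j
      rw [show W'.mulVec z j = ∑ i, W' j i * z i from rfl, Fin.sum_univ_castSucc]
      induction j using Fin.lastCases with
      | last =>
        have h1 : ∀ i : Fin n, W' (Fin.last m) i.castSucc * z i.castSucc = 0 := by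
          intro i
          rw [hW']
          simp [Fin.snoc_last, Fin.snoc_castSucc]
        rw [Finset.sum_congr rfl fun i _ => h1 i]
        have h2 : W' (Fin.last m) (Fin.last n) = 1 := by rw [hW']; simp
        have h3 : b' (Fin.last m) = 0 := by rw [hb']; simp
        have h4 : z (Fin.last n) = max (x (Fin.last n)) 0 := by rw [hz]; simp
        simp [h2, h3, h4, Fin.snoc_last]
      | cast j₀ =>
        have h1 : ∀ i : Fin n, W' j₀.castSucc i.castSucc = W j₀ i := by
          intro i; rw [hW']; simp [Fin.snoc_castSucc]
        have h2 : W' j₀.castSucc (Fin.last n) = 0 := by rw [hW']; simp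
        have h3 : b' j₀.castSucc = b j₀ := by rw [hb']; simp
        have h4 : ∀ i : Fin n, z i.castSucc = Fin.init x i := by
          intro i; rw [hz]; simp
        rw [Finset.sum_congr rfl fun i (_ : i ∈ Finset.univ) => by rw [h1 i, h4 i]]
        rw [h2, h3, Fin.snoc_castSucc, zero_mul, add_zero]
        rfl
    rw [key]
    exact IsReLUNet.comp hR (.affine W' b')
  | relu =>
    rename_i n
    have key : (fun x : Fin (n+1) → ℝ =>
        (Fin.snoc (fun i => max (Fin.init x i) 0) (max (x (Fin.last n)) 0) : Fin (n+1) → ℝ))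
        = fun x : Fin (n+1) → ℝ => fun i => max (x i) 0 := by
      funext x
      funext i
      induction i using Fin.lastCases with
      | last => simp
      | cast i₀ => simp [Fin.snoc_castSucc, Fin.init]
    rw [key]
    exact .relu
  | comp hf hg ihf ihg =>
    rename_i n m k f g
    have key : (fun x : Fin (n+1) → ℝ =>
        (Fin.snoc ((g ∘ f) (Fin.init x)) (max (x (Fin.last n)) 0) : Fin (k+1) → ℝ))
        = (fun y : Fin (m+1) → ℝ =>
            (Fin.snoc (g (Fin.init y)) (max (y (Fin.last m)) 0) : Fin (k+1) → ℝ))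
          ∘ (fun x : Fin (n+1) → ℝ =>
            (Fin.snoc (f (Fin.init x)) (max (x (Fin.last n)) 0) : Fin (m+1) → ℝ)) := by
      funext x
      simp only [Function.comp_apply, Fin.init_snoc, Fin.snoc_last]
      rw [max_eq_left (le_max_right _ _)]
    rw [key]
    exact IsReLUNet.comp ihf ihg

/-- A net computing the minimum of two numbers. -/
lemma min2_net : ∃ g : (Fin 2 → ℝ) → (Fin 1 → ℝ), IsReLUNet g ∧
    ∀ y, g y 0 = min (y 0) (y 1) := by
  refine ⟨(fun z => (!![(1:ℝ),-1,-1]).mulVec z + 0)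
      ∘ ((fun w : Fin 3 → ℝ => fun i => max (w i) 0)
      ∘ (fun y => (!![(1:ℝ),0;(-1:ℝ),0;(1:ℝ),-1]).mulVec y + 0)),
    IsReLUNet.comp (IsReLUNet.comp (.affine _ _) .relu) (.affine _ _), fun y => ?_⟩
  have h : ∀ a b : ℝ, max a 0 - max (-a) 0 - max (a - b) 0 = min a b := by
    intro a b
    rw [relu_sub]
    rcases le_total a b with hab | hab
    · rw [max_eq_right (sub_nonpos.2 hab), min_eq_left hab, sub_zero]
    · rw [max_eq_left (sub_nonneg.2 hab), min_eq_right hab]; ring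
  have h' := h (y 0) (y 1)
  simp only [sub_eq_add_neg] at h'
  simp [Matrix.mulVec, dotProduct, Fin.sum_univ_succ]
  linarith [h']


/-- A net computing the minimum of n+1 nonnegative numbers. -/
lemma min_net (n : ℕ) : ∃ g : (Fin (n+1) → ℝ) → (Fin 1 → ℝ), IsReLUNet g ∧
    ∀ x : Fin (n+1) → ℝ, (∀ i, 0 ≤ x i) →
      (∀ i, g x 0 ≤ x i) ∧ (∃ i, g x 0 = x i) := by
  induction n with
  | zero =>
    refine ⟨fun x => (!![(1:ℝ)]).mulVec x + 0, .affine _ _, fun x hx => ?_⟩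
    have hval : ((!![(1:ℝ)]).mulVec x + 0) 0 = x 0 := by
      simp [Matrix.mulVec, dotProduct, Fin.sum_univ_succ]
    constructor
    · intro i
      have hi : i = 0 := by omega
      rw [hi]
      simp only [hval]
      exact le_refl _
    · exact ⟨0, by simp only [hval]⟩
  | succ k ih =>
    obtain ⟨g, hg, hgval⟩ := ih
    obtain ⟨m2, hm2, hm2val⟩ := min2_net
    set P : (Fin (k+2) → ℝ) → (Fin 2 → ℝ) :=
      fun x => Fin.snoc (g (Fin.init x)) (max (x (Fin.last (k+1))) 0) with hP
    refine ⟨m2 ∘ P, IsReLUNet.comp (pad_net hg) hm2, fun x hx => ?_⟩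
    have hP0 : P x 0 = g (Fin.init x) 0 := by
      show (Fin.snoc (g (Fin.init x)) (x (Fin.last (k+1)) ⊔ 0) : Fin 2 → ℝ) 0 = _
      exact Fin.snoc_castSucc _ _ 0
    have hP1 : P x 1 = x (Fin.last (k+1)) := by
      show (Fin.snoc (g (Fin.init x)) (x (Fin.last (k+1)) ⊔ 0) : Fin 2 → ℝ) (Fin.last 1) = _
      rw [Fin.snoc_last]
      exact max_eq_left (hx _)
    have hval : (m2 ∘ P) x 0 = min (g (Fin.init x) 0) (x (Fin.last (k+1))) := by
      rw [Function.comp_apply, hm2val, hP0, hP1]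
    have hinit : ∀ i, 0 ≤ Fin.init x i := fun i => hx _
    obtain ⟨hle, j₀, hj₀⟩ := hgval (Fin.init x) hinit
    constructor
    · intro i
      rw [hval]
      induction i using Fin.lastCases with
      | last => exact min_le_right _ _
      | cast i₀ => exact le_trans (min_le_left _ _) (hle i₀)
    · rw [hval]
      rcases le_total (g (Fin.init x) 0) (x (Fin.last (k+1))) with hc | hc
      · exact ⟨j₀.castSucc, by rw [min_eq_left hc, hj₀]; rfl⟩
      · exact ⟨Fin.last (k+1), by rw [min_eq_right hc]⟩

/-- The per-coordinate bump net: x ↦ (relu(δ/2 - |x i - x*_i|))_i. -/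
lemma bump_net (d : ℕ) (δ : ℝ) (xstar : Fin d → ℝ) :
    ∃ V : (Fin d → ℝ) → (Fin d → ℝ), IsReLUNet V ∧
      ∀ x i, V x i = max (δ/2 - |x i - xstar i|) 0 := by
  classical
  obtain ⟨D, hD, hDval⟩ := dup_net d
  set A2 : Matrix (Fin d) (Fin (d + d)) ℝ :=
    fun j c => (if c = Fin.castAdd d j then -1 else 0)
      + (if c = Fin.natAdd d j then -1 else 0) with hA2
  refine ⟨(fun w : Fin d → ℝ => fun i => max (w i) 0)
      ∘ ((fun y => A2.mulVec y + fun _ => δ/2)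
      ∘ (D ∘ (fun x => (1 : Matrix (Fin d) (Fin d) ℝ).mulVec x + (-xstar)))),
    IsReLUNet.comp (IsReLUNet.comp (IsReLUNet.comp (.affine _ _) hD) (.affine _ _)) .relu,
    fun x i => ?_⟩
  have hshift : (1 : Matrix (Fin d) (Fin d) ℝ).mulVec x + (-xstar) = fun j => x j - xstar j := by
    funext j
    rw [Matrix.one_mulVec]
    rfl
  show max ((A2.mulVec (D ((1 : Matrix (Fin d) (Fin d) ℝ).mulVec x + (-xstar)))
    + fun _ => δ/2 : Fin d → ℝ) i) 0 = _
  rw [hshift]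
  set z : Fin d → ℝ := fun j => x j - xstar j with hzdef
  have hsum : A2.mulVec (D z) i = - D z (Fin.castAdd d i) - D z (Fin.natAdd d i) := by
    rw [show A2.mulVec (D z) i = ∑ c, A2 i c * D z c from rfl]
    have hsplit : (∑ c, A2 i c * D z c)
        = (∑ c, (if c = Fin.castAdd d i then (-1:ℝ) else 0) * D z c)
          + (∑ c, (if c = Fin.natAdd d i then (-1:ℝ) else 0) * D z c) := by
      rw [← Finset.sum_add_distrib]
      refine Finset.sum_congr rfl fun c _ => ?_
      rw [hA2]
      ring
    rw [hsplit, sum_if_mul, sum_if_mul]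
    ring
  have habs : D z (Fin.castAdd d i) + D z (Fin.natAdd d i) = |x i - xstar i| := by
    rw [(hDval z).1, (hDval z).2]
    exact relu_add_abs _
  show max (A2.mulVec (D z) i + δ/2) 0 = _
  rw [hsum]
  congr 1
  linarith [habs]

theorem stmt_7 {d : ℕ} (ε δ : ℝ) (hε : 0 < ε) (hδ : 0 < δ) (xstar : Fin d → ℝ) :
    ∃ f2 : (Fin d → ℝ) → (Fin 1 → ℝ), IsReLUNet f2 ∧
      (∀ x : Fin d → ℝ, x ∉ {x : Fin d → ℝ | ∀ i, |x i - xstar i| < δ / 2} → f2 x 0 = 0) ∧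
      (∀ x ∈ {x : Fin d → ℝ | ∀ i, |x i - xstar i| < δ / 2}, 0 < f2 x 0 ∧ f2 x 0 < ε / 4) := by
  cases d with
  | zero =>
    refine ⟨fun x => (0 : Matrix (Fin 1) (Fin 0) ℝ).mulVec x + (fun _ => ε/8),
      .affine _ _, ?_, ?_⟩
    · intro x hx
      exact absurd (fun i => i.elim0) hx
    · intro x _
      have hval : ((0 : Matrix (Fin 1) (Fin 0) ℝ).mulVec x + fun _ => ε/8 : Fin 1 → ℝ) 0 = ε/8 := by
        show (0 : Matrix (Fin 1) (Fin 0) ℝ).mulVec x 0 + ε/8 = ε/8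
        rw [Matrix.zero_mulVec]
        simp
      simp only [hval]
      constructor <;> linarith
  | succ k =>
    obtain ⟨V, hV, hVval⟩ := bump_net (k+1) δ xstar
    obtain ⟨gmin, hgmin, hgval⟩ := min_net k
    set c : ℝ := ε / (4 * δ) with hc
    have hcpos : 0 < c := by positivity
    refine ⟨(fun y => (!![c]).mulVec y + 0) ∘ (gmin ∘ V),
      IsReLUNet.comp (IsReLUNet.comp hV hgmin) (.affine _ _), ?_, ?_⟩
    all_goals
      have hVnonneg : ∀ x : Fin (k+1) → ℝ, ∀ i, 0 ≤ V x i := fun x i => by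
        rw [hVval]; exact le_max_right _ _
      have hfval : ∀ x : Fin (k+1) → ℝ,
          ((fun y => (!![c]).mulVec y + 0) ∘ (gmin ∘ V)) x 0 = c * gmin (V x) 0 := by
        intro x
        show (!![c]).mulVec (gmin (V x)) 0 + 0 = _
        rw [add_zero, show (!![c]).mulVec (gmin (V x)) 0
          = ∑ i, !![c] 0 i * gmin (V x) i from rfl]
        simp [Fin.sum_univ_succ]
    · intro x hx
      rw [Set.mem_setOf_eq] at hx
      push_neg at hx
      obtain ⟨i, hi⟩ := hx
      obtain ⟨hle, j, hj⟩ := hgval (V x) (hVnonneg x)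
      have hVi : V x i = 0 := by
        rw [hVval]
        exact max_eq_right (by linarith)
      have h1 : gmin (V x) 0 ≤ 0 := hVi ▸ hle i
      have h2 : 0 ≤ gmin (V x) 0 := hj ▸ hVnonneg x j
      rw [hfval x, le_antisymm h1 h2, mul_zero]
    · intro x hx
      rw [Set.mem_setOf_eq] at hx
      obtain ⟨hle, j, hj⟩ := hgval (V x) (hVnonneg x)
      have hVpos : ∀ i, 0 < V x i := by
        intro i
        rw [hVval]
        have := hx i
        rw [max_eq_left (by linarith)]
        linarith
      have hVle : V x 0 ≤ δ / 2 := by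
        rw [hVval]
        rw [max_eq_left (by linarith [hx 0])]
        have := abs_nonneg (x 0 - xstar 0)
        linarith
      have hgpos : 0 < gmin (V x) 0 := hj ▸ hVpos j
      have hgle : gmin (V x) 0 ≤ δ / 2 := le_trans (hle 0) hVle
      rw [hfval x]
      constructor
      · exact mul_pos hcpos hgpos
      · have h8 : c * (δ / 2) = ε / 8 := by
          rw [hc]
          field_simp
          ring
        have : c * gmin (V x) 0 ≤ c * (δ / 2) := by
          apply mul_le_mul_of_nonneg_left hgle (le_of_lt hcpos)
        rw [h8] at this
        linarith
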